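/- arXiv:1212.1531 — 4 statements merged into one kernel-verified Lean document; each statement's English description precedes it below -/
import Mathlib

section
/- Let C = {x ∈ ℝ⁶ : x ≥ 0 and x₁ + x₂ − 2x₃ + x₄ + x₅ − 2x₆ = 0}. If x ∈ C is admissible and moreover satisfies 2x₁ + 2x₂ − 4x₃ = 0 and −x₂ + x₃ − x₄ + x₆ = 0 (i.e. ν(λ)(x) = 0 and ν(μ)(x) = 0), then x = 0. (This is the paper's verification that the admissible part of the closed-surface solution cone Q₀(𝒯) for the figure-eight knot complement is trivial, whence any closed embedded normal surface in that complement is a union of vertex-linking tori.) -/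
/-- The cone `Q(𝒯)` for Thurston's two-tetrahedron ideal triangulation of the
figure-eight knot complement: nonnegative solutions of the `Q`-matching equation. -/
def QCone : Set (Fin 6 → ℝ) :=
  {x | (∀ i, 0 ≤ x i) ∧ x 0 + x 1 - 2 * x 2 + x 3 + x 4 - 2 * x 5 = 0}

/-- Admissibility: at most one quadrilateral coordinate is nonzero in each tetrahedron. -/
def Admissible (x : Fin 6 → ℝ) : Prop :=
  ((x 1 = 0 ∧ x 2 = 0) ∨ (x 0 = 0 ∧ x 2 = 0) ∨ (x 0 = 0 ∧ x 1 = 0)) ∧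
  ((x 4 = 0 ∧ x 5 = 0) ∨ (x 3 = 0 ∧ x 5 = 0) ∨ (x 3 = 0 ∧ x 4 = 0))

/-- Boundary functional associated to the standard longitude. -/
def nuLambda (x : Fin 6 → ℝ) : ℝ := 2 * x 0 + 2 * x 1 - 4 * x 2

/-- Boundary functional associated to the standard meridian. -/
def nuMu (x : Fin 6 → ℝ) : ℝ := -x 1 + x 2 - x 3 + x 5

/-!
The longitude condition `ν(λ) x = 0` reads `p + p' = 2 p''`, and subtracting it from the
`Q`-matching equation leaves `q + q' = 2 q''`. Within one tetrahedron, a relation `a + b = 2 c`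
with at most one of `a, b, c` nonzero forces all three to vanish.
-/

theorem eq_zero_of_add_eq_two_mul {R : Type*} [Semiring R] [NoZeroDivisors R] [NeZero (2 : R)]
    {a b c : R} (h : a + b = 2 * c)
    (hone : (b = 0 ∧ c = 0) ∨ (a = 0 ∧ c = 0) ∨ (a = 0 ∧ b = 0)) :
    a = 0 ∧ b = 0 ∧ c = 0 := by
  rcases hone with ⟨rfl, rfl⟩ | ⟨rfl, rfl⟩ | ⟨rfl, rfl⟩
  · simpa using h
  · simpa using h
  · have h2c : 2 * c = 0 := by simpa using h.symm
    exact ⟨rfl, rfl, (mul_eq_zero.mp h2c).resolve_left two_ne_zero⟩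

theorem admissible_Q0_trivial_general (x : Fin 6 → ℝ) (hx : x ∈ QCone)
    (hadm : Admissible x) (hlam : nuLambda x = 0) :
    x = 0 := by
  obtain ⟨-, hmatch⟩ := hx
  obtain ⟨hfirst, hsecond⟩ := hadm
  have hp : x 0 + x 1 = 2 * x 2 := by unfold nuLambda at hlam; linarith
  have hq : x 3 + x 4 = 2 * x 5 := by linarith
  obtain ⟨h0, h1, h2⟩ := eq_zero_of_add_eq_two_mul hp hfirst
  obtain ⟨h3, h4, h5⟩ := eq_zero_of_add_eq_two_mul hq hsecond
  ext i
  fin_cases i <;> assumption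

theorem admissible_Q0_trivial (x : Fin 6 → ℝ) (hx : x ∈ QCone)
    (hadm : Admissible x) (hlam : nuLambda x = 0) (hmu : nuMu x = 0) :
    x = 0 :=
  admissible_Q0_trivial_general x hx hadm hlam
end

section
/- Each of the four vectors v₁ = (2,0,0,0,0,1), v₂ = (0,2,0,0,0,1), v₃ = (0,0,1,2,0,0), v₄ = (0,0,1,0,2,0) belongs to C = {x ∈ ℝ⁶ : x ≥ 0 and x₁ + x₂ − 2x₃ + x₄ + x₅ − 2x₆ = 0}, is admissible, and lies on an extremal ray of C: whenever vᵢ = y + z with y, z ∈ C, both y and z are nonnegative scalar multiples of vᵢ. (These are the four admissible extremal rays of Q(𝒯) for the figure-eight knot complement listed in the paper's table; each corresponds to a once-punctured Klein bottle.) -/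
/-- A nonzero vector `v` of the cone lies on an extremal ray: whenever `v = y + z`
with `y, z` in the cone, both `y` and `z` are nonnegative multiples of `v`. -/
def OnExtremalRay (v : Fin 6 → ℝ) : Prop :=
  v ≠ 0 ∧ ∀ y z : Fin 6 → ℝ, y ∈ QCone → z ∈ QCone → v = y + z →
    (∃ a : ℝ, 0 ≤ a ∧ y = a • v) ∧ (∃ b : ℝ, 0 ≤ b ∧ z = b • v)

def matchingWeights : Fin 6 → ℝ := ![1, 1, -2, 1, 1, -2]

lemma mem_QCone_iff {x : Fin 6 → ℝ} :
    x ∈ QCone ↔ 0 ≤ x ∧ ∑ k, matchingWeights k * x k = 0 := by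
  refine and_congr Pi.le_def.symm ?_
  simp only [Fin.sum_univ_six, matchingWeights, Matrix.cons_val]
  constructor <;> intro h <;> linarith

section TwoSupported

variable {ι : Type*} [Fintype ι] {c v y : ι → ℝ} {i j : ι}

theorem eq_div_smul_of_weighted_sum_eq_zero (hij : i ≠ j)
    (hv : ∀ k, k ≠ i ∧ k ≠ j → v k = 0) (hy : ∀ k, k ≠ i ∧ k ≠ j → y k = 0)
    (hcv : ∑ k, c k * v k = 0) (hcy : ∑ k, c k * y k = 0) (hci : c i ≠ 0) (hvj : v j ≠ 0) :
    y = (y j / v j) • v := by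
  rw [Fintype.sum_eq_add i j hij fun k hk => by rw [hv k hk, mul_zero]] at hcv
  rw [Fintype.sum_eq_add i j hij fun k hk => by rw [hy k hk, mul_zero]] at hcy
  have hyi : y i * v j = y j * v i :=
    mul_left_cancel₀ hci (by linear_combination v j * hcy - y j * hcv)
  ext k
  rw [Pi.smul_apply, smul_eq_mul, div_mul_eq_mul_div, eq_div_iff hvj]
  by_cases hki : k = i
  · subst hki; exact hyi
  by_cases hkj : k = j
  · subst hkj; ring
  rw [hv k ⟨hki, hkj⟩, hy k ⟨hki, hkj⟩]; ring

theorem exists_nonneg_smul_of_add_eq_of_weighted_sum_eq_zero (hij : i ≠ j)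
    (hv : ∀ k, k ≠ i ∧ k ≠ j → v k = 0) {z : ι → ℝ} (hy₀ : 0 ≤ y) (hz₀ : 0 ≤ z)
    (hvyz : v = y + z) (hcv : ∑ k, c k * v k = 0) (hcy : ∑ k, c k * y k = 0) (hci : c i ≠ 0)
    (hvj : v j ≠ 0) :
    ∃ a : ℝ, 0 ≤ a ∧ y = a • v := by
  have hy : ∀ k, k ≠ i ∧ k ≠ j → y k = 0 := fun k hk =>
    ((add_eq_zero_iff_of_nonneg (hy₀ k) (hz₀ k)).1 (by rw [← Pi.add_apply, ← hvyz, hv k hk])).1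
  have hvj_pos : 0 < v j := by
    rw [hvyz] at hvj ⊢; exact (add_nonneg (hy₀ j) (hz₀ j)).lt_of_ne' hvj
  exact ⟨y j / v j, div_nonneg (hy₀ j) hvj_pos.le,
    eq_div_smul_of_weighted_sum_eq_zero hij hv hy hcv hcy hci hvj⟩

end TwoSupported

theorem onExtremalRay_of_support_subset_pair {v : Fin 6 → ℝ} {i j : Fin 6} (hij : i ≠ j)
    (hv : ∀ k, k ≠ i ∧ k ≠ j → v k = 0) (hvQ : v ∈ QCone) (hvj : v j ≠ 0) :
    OnExtremalRay v := by
  have hci : matchingWeights i ≠ 0 := by fin_cases i <;> norm_num [matchingWeights]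
  refine ⟨fun h => hvj (by rw [h, Pi.zero_apply]), fun y z hy hz hvyz => ?_⟩
  rw [mem_QCone_iff] at hvQ hy hz
  exact ⟨exists_nonneg_smul_of_add_eq_of_weighted_sum_eq_zero hij hv hy.1 hz.1 hvyz hvQ.2
      hy.2 hci hvj,
    exists_nonneg_smul_of_add_eq_of_weighted_sum_eq_zero hij hv hz.1 hy.1 (by rw [hvyz, add_comm])
      hvQ.2 hz.2 hci hvj⟩

theorem four_admissible_extremal_rays :
    ∀ v ∈ ({![2, 0, 0, 0, 0, 1], ![0, 2, 0, 0, 0, 1],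
            ![0, 0, 1, 2, 0, 0], ![0, 0, 1, 0, 2, 0]} : Set (Fin 6 → ℝ)),
      v ∈ QCone ∧ Admissible v ∧ OnExtremalRay v := by
  intro v hv
  simp only [Set.mem_insert_iff, Set.mem_singleton_iff] at hv
  have hQ : v ∈ QCone := by
    rcases hv with rfl | rfl | rfl | rfl <;> simp [QCone, Fin.forall_fin_succ]
  refine ⟨hQ, ?_, ?_⟩
  · rcases hv with rfl | rfl | rfl | rfl <;> simp [Admissible]
  · rcases hv with rfl | rfl | rfl | rfl
    · exact onExtremalRay_of_support_subset_pair (i := 0) (j := 5) (by decide)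
        (by simp [Fin.forall_fin_succ]) hQ (by simp)
    · exact onExtremalRay_of_support_subset_pair (i := 1) (j := 5) (by decide)
        (by simp [Fin.forall_fin_succ]) hQ (by simp)
    · exact onExtremalRay_of_support_subset_pair (i := 3) (j := 2) (by decide)
        (by simp [Fin.forall_fin_succ]) hQ (by simp)
    · exact onExtremalRay_of_support_subset_pair (i := 4) (j := 2) (by decide)
        (by simp [Fin.forall_fin_succ]) hQ (by simp)
end

section
/- Every nonzero admissible vector x in C = {x ∈ ℝ⁶ : x ≥ 0 and x₁ + x₂ − 2x₃ + x₄ + x₅ − 2x₆ = 0} is a positive scalar multiple of one of the four vectors v₁ = (2,0,0,0,0,1), v₂ = (0,2,0,0,0,1), v₃ = (0,0,1,2,0,0), v₄ = (0,0,1,0,2,0). (This is the paper's direct calculation that the cone Q(𝒯) for the figure-eight knot complement has exactly four admissible extremal rays.) -/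
/-! Write the matching equation as `x₁ + x₂ + x₄ + x₅ = 2 (x₃ + x₆)`, both sides nonnegative.
An admissible `x` has at most one nonzero coordinate per tetrahedron. If both lie on the same
side of the equation, that side vanishes and `x = 0`; otherwise the equation reads `x_i = 2 x_j`
for the two surviving coordinates, which is one of the four rays. -/

theorem exists_pos_smul_mem_of_eq_smul {E : Type*} [AddCommGroup E] [Module ℝ E] {S : Set E}
    {x v : E} {c : ℝ} (hx : x ≠ 0) (hc : 0 ≤ c) (hv : v ∈ S) (h : x = c • v) :
    ∃ c : ℝ, 0 < c ∧ ∃ v ∈ S, x = c • v := by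
  refine ⟨c, hc.lt_of_ne ?_, v, hv, h⟩
  rintro rfl
  exact hx (by rw [h, zero_smul])

theorem admissible_part_is_four_rays (x : Fin 6 → ℝ) (hx : x ∈ QCone)
    (hadm : Admissible x) (hne : x ≠ 0) :
    ∃ c : ℝ, 0 < c ∧
      ∃ v ∈ ({![2, 0, 0, 0, 0, 1], ![0, 2, 0, 0, 0, 1],
              ![0, 0, 1, 2, 0, 0], ![0, 0, 1, 0, 2, 0]} : Set (Fin 6 → ℝ)),
        x = c • v := by
  obtain ⟨hnonneg, hmatch⟩ := hx
  have := hnonneg 0; have := hnonneg 1; have := hnonneg 2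
  have := hnonneg 3; have := hnonneg 4; have := hnonneg 5
  rcases hadm with ⟨⟨e1, e2⟩ | ⟨e0, e2⟩ | ⟨e0, e1⟩, ⟨e4, e5⟩ | ⟨e3, e5⟩ | ⟨e3, e4⟩⟩
  · exact (hne (by ext i; fin_cases i <;> simp <;> linarith)).elim
  · exact (hne (by ext i; fin_cases i <;> simp <;> linarith)).elim
  · exact exists_pos_smul_mem_of_eq_smul (v := ![2, 0, 0, 0, 0, 1]) hne (hnonneg 5) (by simp)
      (by ext i; fin_cases i <;> simp <;> linarith)
  · exact (hne (by ext i; fin_cases i <;> simp <;> linarith)).elim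
  · exact (hne (by ext i; fin_cases i <;> simp <;> linarith)).elim
  · exact exists_pos_smul_mem_of_eq_smul (v := ![0, 2, 0, 0, 0, 1]) hne (hnonneg 5) (by simp)
      (by ext i; fin_cases i <;> simp <;> linarith)
  · exact exists_pos_smul_mem_of_eq_smul (v := ![0, 0, 1, 2, 0, 0]) hne (hnonneg 2) (by simp)
      (by ext i; fin_cases i <;> simp <;> linarith)
  · exact exists_pos_smul_mem_of_eq_smul (v := ![0, 0, 1, 0, 2, 0]) hne (hnonneg 2) (by simp)
      (by ext i; fin_cases i <;> simp <;> linarith)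
  · exact (hne (by ext i; fin_cases i <;> simp <;> linarith)).elim
end

section
/- For every nonzero admissible vector x in C = {x ∈ ℝ⁶ : x ≥ 0 and x₁ + x₂ − 2x₃ + x₄ + x₅ − 2x₆ = 0}, both ν(μ)(x) ≠ 0 and ν(λ)(x) ≠ 0. (This is the linear-algebraic content of the paper's observation that no spun-normal surface in Thurston's triangulation of the figure-eight knot complement is a Seifert surface for the knot: every nonzero admissible solution has boundary functional nonvanishing on both the meridian and the longitude.) -/
def AtMostOneNonzero {M : Type*} [Zero M] (a b c : M) : Prop :=
  (b = 0 ∧ c = 0) ∨ (a = 0 ∧ c = 0) ∨ (a = 0 ∧ b = 0)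

namespace AtMostOneNonzero

theorem eq_zero_of_add_eq_two_mul {K : Type*} [Field K] [CharZero K] {a b c : K}
    (h : AtMostOneNonzero a b c) (hsum : a + b = 2 * c) : a = 0 ∧ b = 0 ∧ c = 0 := by
  rcases h with ⟨rfl, rfl⟩ | ⟨rfl, rfl⟩ | ⟨rfl, rfl⟩ <;> simp_all [eq_comm]

theorem swap {M : Type*} [Zero M] {a b c : M} (h : AtMostOneNonzero a b c) :
    AtMostOneNonzero b a c := by
  unfold AtMostOneNonzero at h ⊢
  tauto

theorem exists_common_zero {M : Type*} [Zero M] {a b c d e f : M}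
    (h₁ : AtMostOneNonzero a b c) (h₂ : AtMostOneNonzero d e f) :
    (a = 0 ∧ d = 0) ∨ (b = 0 ∧ e = 0) ∨ (c = 0 ∧ f = 0) := by
  unfold AtMostOneNonzero at h₁ h₂
  tauto

end AtMostOneNonzero

theorem admissible_iff (x : Fin 6 → ℝ) :
    Admissible x ↔
      AtMostOneNonzero (x 0) (x 1) (x 2) ∧ AtMostOneNonzero (x 3) (x 4) (x 5) :=
  Iff.rfl

theorem eq_zero_of_nuLambda_eq_zero {x : Fin 6 → ℝ} (hx : x ∈ QCone) (hadm : Admissible x)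
    (h : nuLambda x = 0) : x = 0 := by
  obtain ⟨hfirst, hsecond⟩ := (admissible_iff x).1 hadm
  unfold nuLambda at h
  obtain ⟨h0, h1, h2⟩ := hfirst.eq_zero_of_add_eq_two_mul (by linarith)
  obtain ⟨h3, h4, h5⟩ := hsecond.eq_zero_of_add_eq_two_mul (by linarith [hx.2])
  funext i
  fin_cases i <;> assumption

theorem eq_zero_of_nuMu_eq_zero {x : Fin 6 → ℝ} (hx : x ∈ QCone) (hadm : Admissible x)
    (h : nuMu x = 0) : x = 0 := by
  obtain ⟨hnonneg, hmatch⟩ := hx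
  obtain ⟨hfirst, hsecond⟩ := (admissible_iff x).1 hadm
  unfold nuMu at h
  have hpairs : x 0 + x 4 = x 1 + x 3 ∧ x 1 + x 3 = x 2 + x 5 := ⟨by linarith, by linarith⟩
  have hsum : x 0 + x 4 = 0 ∧ x 1 + x 3 = 0 ∧ x 2 + x 5 = 0 := by
    rcases hfirst.exists_common_zero hsecond.swap with ⟨ha, hd⟩ | ⟨ha, hd⟩ | ⟨ha, hd⟩ <;>
      refine ⟨?_, ?_, ?_⟩ <;> linarith
  have hzero (i j : Fin 6) (hij : x i + x j = 0) : x i = 0 ∧ x j = 0 :=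
    (add_eq_zero_iff_of_nonneg (hnonneg i) (hnonneg j)).1 hij
  obtain ⟨h0, h4⟩ := hzero 0 4 hsum.1
  obtain ⟨h1, h3⟩ := hzero 1 3 hsum.2.1
  obtain ⟨h2, h5⟩ := hzero 2 5 hsum.2.2
  funext i
  fin_cases i <;> assumption

theorem no_spun_normal_seifert_surface (x : Fin 6 → ℝ) (hx : x ∈ QCone)
    (hadm : Admissible x) (hne : x ≠ 0) :
    nuMu x ≠ 0 ∧ nuLambda x ≠ 0 :=
  ⟨fun h => hne (eq_zero_of_nuMu_eq_zero hx hadm h),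
    fun h => hne (eq_zero_of_nuLambda_eq_zero hx hadm h)⟩
end
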